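/- Let α₁,...,α_n be formulas and u_n a monotone valuation on M_n such that a singleton {i} forces α_j iff i = j, and suppose each world of M_n forcing ¬¬(α₁ ∨ ... ∨ α_n). For a nonempty I ⊆ {1,...,n} define α_I := ¬¬⋁_{i∈I} α_i. Then for all nonempty I, J ⊆ {1,...,n}: the world J forces α_I under u_n if and only if J ⊆ I. -/

import Mathlib

inductive Fml : Type where
  | atom : ℕ → Fml
  | bot  : Fml
  | and  : Fml → Fml → Fml
  | or   : Fml → Fml → Fml
  | imp  : Fml → Fml → Fml
deriving DecidableEq

/-- Intuitionistic negation: ¬φ := φ → ⊥. -/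
def Fml.neg (φ : Fml) : Fml := .imp φ .bot

/-- Biconditional. -/
def Fml.iff (φ ψ : Fml) : Fml := .and (.imp φ ψ) (.imp ψ φ)

/-- Disjunction of a list of formulas (empty disjunction is ⊥). -/
def disj : List Fml → Fml
  | [] => .bot
  | [φ] => φ
  | φ :: l => .or φ (disj l)

/-- Conjunction of a list of formulas (empty conjunction is ¬⊥). -/
def conj : List Fml → Fml
  | [] => Fml.neg .bot
  | [φ] => φ
  | φ :: l => .and φ (conj l)

/-- Substitution, extended homomorphically. -/
def Fml.subst (σ : ℕ → Fml) : Fml → Fml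
  | .atom p => σ p
  | .bot => .bot
  | .and φ ψ => .and (φ.subst σ) (ψ.subst σ)
  | .or φ ψ => .or (φ.subst σ) (ψ.subst σ)
  | .imp φ ψ => .imp (φ.subst σ) (ψ.subst σ)

/-- Hilbert-style provability for intuitionistic logic plus extra axioms `Ax`. -/
inductive Prov (Ax : Fml → Prop) : Fml → Prop where
  | ax {φ} : Ax φ → Prov Ax φ
  | k {φ ψ} : Prov Ax (.imp φ (.imp ψ φ))
  | s {φ ψ χ} : Prov Ax (.imp (.imp φ (.imp ψ χ)) (.imp (.imp φ ψ) (.imp φ χ)))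
  | andI {φ ψ} : Prov Ax (.imp φ (.imp ψ (.and φ ψ)))
  | andE₁ {φ ψ} : Prov Ax (.imp (.and φ ψ) φ)
  | andE₂ {φ ψ} : Prov Ax (.imp (.and φ ψ) ψ)
  | orI₁ {φ ψ} : Prov Ax (.imp φ (.or φ ψ))
  | orI₂ {φ ψ} : Prov Ax (.imp ψ (.or φ ψ))
  | orE {φ ψ χ} : Prov Ax (.imp (.imp φ χ) (.imp (.imp ψ χ) (.imp (.or φ ψ) χ)))
  | exfalso {φ} : Prov Ax (.imp .bot φ)
  | mp {φ ψ} : Prov Ax (.imp φ ψ) → Prov Ax φ → Prov Ax ψ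

/-- No extra axioms: pure intuitionistic logic is `Prov NoAx`. -/
def NoAx : Fml → Prop := fun _ => False

/-- Instances of the weak Kreisel–Putnam axiom schema. -/
def wKPAx : Fml → Prop := fun φ =>
  ∃ a b c : Fml, φ = .imp (.imp a.neg (.or b.neg c.neg))
    (.or (.imp a.neg b.neg) (.imp a.neg c.neg))

/-- Intuitionistic Kripke forcing over a preordered set of worlds. -/
def Force {W : Type} [Preorder W] (V : W → ℕ → Prop) : W → Fml → Prop
  | w, .atom p => V w p
  | _, .bot => False
  | w, .and φ ψ => Force V w φ ∧ Force V w ψ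
  | w, .or φ ψ => Force V w φ ∨ Force V w ψ
  | w, .imp φ ψ => ∀ v, w ≤ v → Force V v φ → Force V v ψ

/-- A valuation is monotone (persistent). -/
def MonoVal {W : Type} [Preorder W] (V : W → ℕ → Prop) : Prop :=
  ∀ ⦃w w'⦄, w ≤ w' → ∀ p, V w p → V w' p

/-- The Medvedev frame `M n`: nonempty subsets of `Fin n` ordered by reverse inclusion. -/
def Med (n : ℕ) : Type := {I : Finset (Fin n) // I.Nonempty}

instance {n : ℕ} : PartialOrder (Med n) where
  le I J := J.1 ⊆ I.1
  le_refl I := Finset.Subset.refl _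
  le_trans I J K h h' := Finset.Subset.trans h' h
  le_antisymm I J h h' := Subtype.ext (Finset.Subset.antisymm h' h)

instance {n : ℕ} : DecidableEq (Med n) := Subtype.instDecidableEq

/-- Validity on the Medvedev frame `M n`. -/
def MedValid (n : ℕ) (φ : Fml) : Prop :=
  ∀ V : Med n → ℕ → Prop, MonoVal V → ∀ w, Force V w φ

/-- Medvedev's logic of finite problems. -/
def ML (φ : Fml) : Prop := ∀ n, MedValid n φ

/-- The singleton world `{i}` of `M n`. -/
def single {n : ℕ} (i : Fin n) : Med n := ⟨{i}, Finset.singleton_nonempty i⟩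

/-- Exponentiation on ℕ∞ (anything involving ∞ gives ∞). -/
def epow : ℕ∞ → ℕ∞ → ℕ∞
  | some a, some b => some (a ^ b)
  | _, _ => ⊤

/-- Kreisel–Putnam rank. -/
def rank : Fml → ℕ∞
  | .imp _ .bot => 1
  | .or φ ψ => rank φ + rank ψ
  | .and φ ψ => rank φ * rank ψ
  | .imp φ ψ => epow (rank ψ) (rank φ)
  | _ => ⊤

/-- Disjunction of `α i` over a finite index set. -/
noncomputable def bigOrOn {n : ℕ} (α : Fin n → Fml) (I : Finset (Fin n)) : Fml :=
  disj (I.toList.map α)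

/-- `α_I := ¬¬⋁_{i ∈ I} α_i`. -/
noncomputable def alphaF {n : ℕ} (α : Fin n → Fml) (I : Finset (Fin n)) : Fml :=
  Fml.neg (Fml.neg (bigOrOn α I))

/-! In `M n` the singletons `{j}` are exactly the maximal worlds, each is its own only successor,
and the worlds above `J` include `{j}` for every `j ∈ J`. Hence `J` forces a double negation `¬¬φ`
iff every `{j}` with `j ∈ J` forces `φ`. At `{j}` the disjunction `⋁_{i ∈ I} α_i` holds iff `j ∈ I`,
so `J` forces `α_I` iff `J ⊆ I`. -/

theorem force_disj {W : Type} [Preorder W] {V : W → ℕ → Prop} (w : W) :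
    ∀ l : List Fml, Force V w (disj l) ↔ ∃ φ ∈ l, Force V w φ
  | [] => by simp [disj, Force]
  | [φ] => by simp [disj]
  | φ :: ψ :: l => by
    simp only [disj, Force, force_disj w (ψ :: l), List.exists_mem_cons_iff]

theorem force_bigOrOn {n : ℕ} {V : Med n → ℕ → Prop} (w : Med n) (α : Fin n → Fml)
    (I : Finset (Fin n)) : Force V w (bigOrOn α I) ↔ ∃ i ∈ I, Force V w (α i) := by
  simp [bigOrOn, force_disj]

namespace Med

theorem le_single_iff {n : ℕ} {w : Med n} {j : Fin n} : w ≤ single j ↔ j ∈ w.1 :=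
  Finset.singleton_subset_iff

theorem eq_single_of_single_le {n : ℕ} {w : Med n} {j : Fin n} (h : single j ≤ w) :
    w = single j :=
  Subtype.ext <| (Finset.subset_singleton_iff.1 h).resolve_left w.2.ne_empty

theorem force_neg_neg_iff {n : ℕ} {V : Med n → ℕ → Prop} {w : Med n} {φ : Fml} :
    Force V w φ.neg.neg ↔ ∀ j ∈ w.1, Force V (single j) φ := by
  constructor
  · intro h j hj
    by_contra hφ
    refine h (single j) (le_single_iff.2 hj) fun v hv hvφ => hφ ?_
    rwa [eq_single_of_single_le hv] at hvφ
  · intro h v hv hnφ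
    obtain ⟨j, hj⟩ := v.2
    exact hnφ (single j) (le_single_iff.2 hj) (h j (hv hj))

end Med

theorem stmt11_general (n : ℕ) (α : Fin n → Fml) (u : Med n → ℕ → Prop)
    (hsing : ∀ i j : Fin n, Force u (single i) (α j) ↔ i = j) :
    ∀ (I J : Finset (Fin n)) (_ : I.Nonempty) (hJ : J.Nonempty),
      Force u ⟨J, hJ⟩ (alphaF α I) ↔ J ⊆ I := by
  intro I J _ hJ
  -- `⟨J, hJ⟩` elaborates at the underlying subtype, not at `Med n`, so `rw` cannot match it.
  refine (Med.force_neg_neg_iff (w := ⟨J, hJ⟩)).trans ?_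
  simp only [force_bigOrOn, hsing, exists_eq_right', Finset.subset_iff]

/-- if under the monotone valuation `u` on `M n` each singleton `{i}`
forces `α_j` iff `i = j`, and every world forces `¬¬(α₁ ∨ ... ∨ α_n)`, then the world
`J` forces `α_I := ¬¬⋁_{i∈I} α_i` iff `J ⊆ I`. -/
theorem stmt11 (n : ℕ) (α : Fin n → Fml) (u : Med n → ℕ → Prop)
    (hu : MonoVal u)
    (hsing : ∀ i j : Fin n, Force u (single i) (α j) ↔ i = j)
    (hexh : ∀ w : Med n, Force u w (Fml.neg (Fml.neg (disj (List.ofFn α))))) :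
    ∀ (I J : Finset (Fin n)) (_ : I.Nonempty) (hJ : J.Nonempty),
      Force u ⟨J, hJ⟩ (alphaF α I) ↔ J ⊆ I :=
  stmt11_general n α u hsing
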